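/- For each n ≥ 3, the algebra D_n on {0,1,...,n} obtained from C_n by adding a new top element n with n·0 = n, n·k = n−k−1 for 1 ≤ k ≤ n−2, n·(n−1) = 1, and k·n = 0 for k ∈ C_n, is a BCK-algebra. -/
import Mathlib

def Fd (n a b : ℕ) : ℕ :=
  if b = n then 0 else
  if a = n then (if b = 0 then n else if b = n-1 then 1 else n - b - 1) else a - b

variable {n : ℕ}

lemma Fd_le (hn : 3 ≤ n) (a b : ℕ) (ha : a ≤ n) : Fd n a b ≤ n := by
  unfold Fd; split_ifs <;> omega

lemma Fd_topr (a : ℕ) : Fd n a n = 0 := by simp [Fd]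

lemma Fd_zeror (hn : 3 ≤ n) (a : ℕ) (ha : a ≤ n) : Fd n a 0 = a := by
  unfold Fd; split_ifs <;> omega

lemma Fd_zerol (hn : 3 ≤ n) (a : ℕ) : Fd n 0 a = 0 := by
  unfold Fd; split_ifs <;> omega

lemma Fd_self (hn : 3 ≤ n) (a : ℕ) (ha : a ≤ n) : Fd n a a = 0 := by
  unfold Fd; split_ifs <;> omega

lemma Fd_lt (a b : ℕ) (ha : a < n) (hb : b < n) : Fd n a b = a - b := by
  unfold Fd; split_ifs <;> omega

lemma g0 (hn : 3 ≤ n) : Fd n n 0 = n := by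
  unfold Fd; split_ifs <;> omega

lemma gmid (hn : 3 ≤ n) {b : ℕ} (hb1 : 1 ≤ b) (hb2 : b ≤ n - 2) :
    Fd n n b = n - b - 1 := by
  unfold Fd; split_ifs <;> omega

lemma gn1 (hn : 3 ≤ n) : Fd n n (n - 1) = 1 := by
  unfold Fd; split_ifs <;> omega

lemma g_lt (hn : 3 ≤ n) {b : ℕ} (hb1 : 1 ≤ b) (hb2 : b < n) : Fd n n b < n := by
  unfold Fd; split_ifs <;> omega

lemma g_pos (hn : 3 ≤ n) {b : ℕ} (hb1 : 1 ≤ b) (hb2 : b < n) : 1 ≤ Fd n n b := by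
  unfold Fd; split_ifs <;> omega

lemma g_sub (hn : 3 ≤ n) {b c : ℕ} (hb1 : 1 ≤ b) (hb2 : b < n)
    (hc1 : 1 ≤ c) (hc2 : c < n) : Fd n n b - Fd n n c ≤ c - b := by
  unfold Fd; split_ifs <;> omega

lemma g_ge (hn : 3 ≤ n) {a b : ℕ} (ha : a < n) (hb1 : 1 ≤ b) (hb2 : b < n) :
    a - b ≤ Fd n n b := by
  unfold Fd; split_ifs <;> omega

lemma gg_le (hn : 3 ≤ n) {c : ℕ} (hc1 : 1 ≤ c) (hc2 : c < n) :
    Fd n n (Fd n n c) ≤ c := by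
  by_cases h : c = n - 1
  · rw [h, gn1 hn, gmid hn le_rfl (by omega)]; omega
  · rw [gmid hn hc1 (by omega), gmid hn (by omega) (by omega)]; omega

lemma Fd1 (hn : 3 ≤ n) (a b c : ℕ) (ha : a ≤ n) (hb : b ≤ n) (hc : c ≤ n) :
    Fd n (Fd n (Fd n a b) (Fd n a c)) (Fd n c b) = 0 := by
  by_cases hb' : b = n
  · rw [hb', Fd_topr, Fd_topr, Fd_zerol hn, Fd_zerol hn]
  · by_cases hc' : c = n
    · rw [hc', Fd_topr, Fd_zeror hn _ (Fd_le hn a b ha)]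
      by_cases ha' : a = n
      · rw [ha']; exact Fd_self hn _ (Fd_le hn n b le_rfl)
      · by_cases hb0 : b = 0
        · rw [hb0, g0 hn, Fd_topr]
        · rw [Fd_lt a b (by omega) (by omega),
            Fd_lt (a - b) (Fd n n b) (by omega) (g_lt hn (by omega) (by omega))]
          have := g_ge hn (show a < n by omega) (show 1 ≤ b by omega)
            (show b < n by omega)
          omega
    · by_cases ha' : a = n
      · rw [ha', Fd_lt c b (by omega) (by omega)]
        by_cases hc0 : c = 0
        · by_cases hb0 : b = 0
          · rw [hb0, hc0, g0 hn, Fd_topr, Fd_zerol hn]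
          · rw [hc0, g0 hn, Fd_topr, Fd_zerol hn]
        · by_cases hb0 : b = 0
          · rw [hb0, g0 hn]
            have h1 : 1 ≤ Fd n n c := g_pos hn (by omega) (by omega)
            have h2 : Fd n n c < n := g_lt hn (by omega) (by omega)
            rw [Fd_lt (Fd n n (Fd n n c)) (c - 0) (g_lt hn h1 h2) (by omega)]
            have := gg_le hn (show 1 ≤ c by omega) (show c < n by omega)
            omega
          · have hgb : Fd n n b < n := g_lt hn (by omega) (by omega)
            have hgc : Fd n n c < n := g_lt hn (by omega) (by omega)
            rw [Fd_lt (Fd n n b) (Fd n n c) hgb hgc,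
              Fd_lt (Fd n n b - Fd n n c) (c - b) (by omega) (by omega)]
            have := g_sub hn (show 1 ≤ b by omega) (show b < n by omega)
              (show 1 ≤ c by omega) (show c < n by omega)
            omega
      · rw [Fd_lt a b (by omega) (by omega), Fd_lt a c (by omega) (by omega),
          Fd_lt c b (by omega) (by omega),
          Fd_lt (a - b) (a - c) (by omega) (by omega),
          Fd_lt (a - b - (a - c)) (c - b) (by omega) (by omega)]
        omega

lemma Fd2 (hn : 3 ≤ n) (a b : ℕ) (ha : a ≤ n) (hb : b ≤ n) :
    Fd n (Fd n a (Fd n a b)) b = 0 := by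
  by_cases hb' : b = n
  · rw [hb', Fd_topr]
  · by_cases ha' : a = n
    · by_cases hb0 : b = 0
      · rw [ha', hb0, g0 hn, Fd_topr, Fd_zerol hn]
      · rw [ha']
        have h1 : 1 ≤ Fd n n b := g_pos hn (by omega) (by omega)
        have h2 : Fd n n b < n := g_lt hn (by omega) (by omega)
        rw [Fd_lt (Fd n n (Fd n n b)) b (g_lt hn h1 h2) (by omega)]
        have := gg_le hn (show 1 ≤ b by omega) (show b < n by omega)
        omega
    · rw [Fd_lt a b (by omega) (by omega),
        Fd_lt a (a - b) (by omega) (by omega),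
        Fd_lt (a - (a - b)) b (by omega) (by omega)]
      omega

lemma Fd5 (hn : 3 ≤ n) (a b : ℕ) (ha : a ≤ n) (hb : b ≤ n)
    (h1 : Fd n a b = 0) (h2 : Fd n b a = 0) : a = b := by
  unfold Fd at h1 h2; split_ifs at h1 h2 <;> omega

set_option maxHeartbeats 2000000 in
/-- For n ≥ 3, the algebra D_n on {0,1,...,n} obtained from the chain C_n
(truncated subtraction on {0,...,n−1}) by adding a new top element n with
n·0 = n, n·k = n−k−1 for 1 ≤ k ≤ n−2, n·(n−1) = 1, n·n = 0, and k·n = 0 for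
k ∈ C_n, is a BCK-algebra (with zero element 0). -/
theorem stmt_14 (n : ℕ) (hn : 3 ≤ n) (f : Fin (n + 1) → Fin (n + 1) → Fin (n + 1))
    (hC : ∀ x y : Fin (n + 1), x.val < n → y.val < n → (f x y).val = x.val - y.val)
    (htop0 : (f ⟨n, by omega⟩ ⟨0, by omega⟩).val = n)
    (htopk : ∀ k : Fin (n + 1), 1 ≤ k.val → k.val ≤ n - 2 →
      (f ⟨n, by omega⟩ k).val = n - k.val - 1)
    (htopn1 : (f ⟨n, by omega⟩ ⟨n - 1, by omega⟩).val = 1)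
    (htoptop : (f ⟨n, by omega⟩ ⟨n, by omega⟩).val = 0)
    (hktop : ∀ k : Fin (n + 1), k.val < n → (f k ⟨n, by omega⟩).val = 0) :
    (∀ x y z : Fin (n + 1),
      f (f (f x y) (f x z)) (f z y) = ⟨0, by omega⟩) ∧
    (∀ x y : Fin (n + 1), f (f x (f x y)) y = ⟨0, by omega⟩) ∧
    (∀ x : Fin (n + 1), f x x = ⟨0, by omega⟩) ∧
    (∀ x : Fin (n + 1), f ⟨0, by omega⟩ x = ⟨0, by omega⟩) ∧
    (∀ x y : Fin (n + 1),
      f x y = ⟨0, by omega⟩ → f y x = ⟨0, by omega⟩ → x = y) := by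
  have hF : ∀ x y : Fin (n + 1), (f x y).val = Fd n x.val y.val := by
    intro x y
    rcases x with ⟨a, hax⟩
    rcases y with ⟨b, hby⟩
    show (f ⟨a, hax⟩ ⟨b, hby⟩).val = Fd n a b
    by_cases hb : b = n
    · have e1 : (⟨b, hby⟩ : Fin (n + 1)) = ⟨n, n.lt_succ_self⟩ := Fin.ext hb
      rw [e1, hb, Fd_topr]
      by_cases ha : a = n
      · have e2 : (⟨a, hax⟩ : Fin (n + 1)) = ⟨n, n.lt_succ_self⟩ := Fin.ext ha
        rw [e2]; exact htoptop
      · exact hktop ⟨a, hax⟩ (show a < n by omega)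
    · by_cases ha : a = n
      · have e2 : (⟨a, hax⟩ : Fin (n + 1)) = ⟨n, n.lt_succ_self⟩ := Fin.ext ha
        rw [e2, ha]
        by_cases hb0 : b = 0
        · have e3 : (⟨b, hby⟩ : Fin (n + 1)) = ⟨0, Nat.succ_pos n⟩ := Fin.ext hb0
          rw [e3, hb0, g0 hn]; exact htop0
        · by_cases hb1 : b = n - 1
          · have e3 : (⟨b, hby⟩ : Fin (n + 1)) = ⟨n - 1, Nat.lt_succ_of_le (Nat.sub_le n 1)⟩ :=
              Fin.ext hb1
            rw [e3, hb1, gn1 hn]; exact htopn1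
          · rw [gmid hn (by omega) (by omega)]
            exact htopk ⟨b, hby⟩ (show 1 ≤ b by omega) (show b ≤ n - 2 by omega)
      · rw [Fd_lt (n := n) a b (by omega) (by omega)]
        exact hC ⟨a, hax⟩ ⟨b, hby⟩ (show a < n by omega) (show b < n by omega)
  refine ⟨?_, ?_, ?_, ?_, ?_⟩
  · intro x y z
    apply Fin.ext
    simp only [hF]
    exact Fd1 hn _ _ _ (Fin.is_le x) (Fin.is_le y) (Fin.is_le z)
  · intro x y
    apply Fin.ext
    simp only [hF]
    exact Fd2 hn _ _ (Fin.is_le x) (Fin.is_le y)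
  · intro x
    apply Fin.ext
    simp only [hF]
    exact Fd_self hn _ (Fin.is_le x)
  · intro x
    apply Fin.ext
    simp only [hF]
    exact Fd_zerol hn _
  · intro x y h1 h2
    have h1' : (f x y).val = 0 := by rw [h1]
    have h2' : (f y x).val = 0 := by rw [h2]
    rw [hF] at h1' h2'
    exact Fin.ext (Fd5 hn _ _ (Fin.is_le x) (Fin.is_le y) h1' h2')
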